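/- arXiv:math/0608092 — 7 statements merged into one kernel-verified Lean document; each statement's English description precedes it below -/
import Mathlib

section
/- Let u : ℝ² → ℝ be a C² function (coordinates (x,t)) that solves the double Burgers equation L_u(L_u u) = 0 on all of ℝ². Set A(c) := (L_u u)(c,0), B(c) := u(c,0), and x(c,t) := (A(c)/2)·t² + B(c)·t + c. Then for all c, t ∈ ℝ one has u(x(c,t), t) = A(c)·t + B(c). -/
/-!
Along the curve `s ↦ (X c s, s)`, whose speed `A c * s + B c` need not equal `u`, the defects
`f = u - (A c * s + B c)` and `g = L_u u - A c` satisfy the linear system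
`f' = g - u_x f`, `g' = L_u (L_u u) - (L_u u)_x f = -(L_u u)_x f`.
Both vanish at `s = 0`, so by uniqueness for linear ODEs they vanish identically.
-/

/-- The operator `L_u` acting on `v`:  `(L_u v)(x,t) = ∂v/∂t + u·∂v/∂x`,
with coordinates `(x,t)` on `ℝ × ℝ`. -/
noncomputable def Lop (u v : ℝ × ℝ → ℝ) : ℝ × ℝ → ℝ :=
  fun p => fderiv ℝ v p (0, 1) + u p * fderiv ℝ v p (1, 0)

open Set

theorem contDiff_Lop {n : WithTop ℕ∞} {u v : ℝ × ℝ → ℝ} (hu : ContDiff ℝ n u)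
    (hv : ContDiff ℝ (n + 1) v) : ContDiff ℝ n (Lop u v) := by
  have hdv : ContDiff ℝ n (fderiv ℝ v) := hv.fderiv_right le_rfl
  exact (hdv.clm_apply contDiff_const).add (hu.mul (hdv.clm_apply contDiff_const))

theorem hasDerivAt_comp_graph {u v : ℝ × ℝ → ℝ} {x : ℝ → ℝ} {x' s : ℝ}
    (hv : DifferentiableAt ℝ v (x s, s)) (hx : HasDerivAt x x' s) :
    HasDerivAt (fun r => v (x r, r))
      (Lop u v (x s, s) + (x' - u (x s, s)) * fderiv ℝ v (x s, s) (1, 0)) s := by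
  have hγ : HasDerivAt (fun r => (x r, r)) (x', 1) s := hx.prodMk (hasDerivAt_id s)
  refine (HasFDerivAt.comp_hasDerivAt (f := fun r => (x r, r)) s hv.hasFDerivAt hγ).congr_deriv ?_
  have hdir : (x', (1 : ℝ)) = ((0 : ℝ), (1 : ℝ)) + x' • ((1 : ℝ), (0 : ℝ)) := by simp
  rw [hdir, map_add, map_smul, smul_eq_mul, Lop]
  ring

theorem linear_ODE_solution_eq_zero {E : Type*} [NormedAddCommGroup E] [NormedSpace ℝ E]
    {M : ℝ → E →L[ℝ] E} {F : ℝ → E} (hM : Continuous M)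
    (hF : ∀ s, HasDerivAt F (M s (F s)) s) {t₀ : ℝ} (h₀ : F t₀ = 0) (t : ℝ) : F t = 0 := by
  set T := |t| + |t₀| + 1
  obtain ⟨C, hC⟩ := (isCompact_Icc (a := -T) (b := T)).exists_bound_of_continuousOn
    hM.continuousOn
  have hLip : ∀ s ∈ Ioo (-T) T, LipschitzOnWith C.toNNReal (M s) univ := fun s hs =>
    ((M s).lipschitz.weaken (by
      rw [← NNReal.coe_le_coe, coe_nnnorm, Real.coe_toNNReal']
      exact (hC s (Ioo_subset_Icc_self hs)).trans (le_max_left _ _))).lipschitzOnWith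
  have hmem : ∀ r ∈ ({t, t₀} : Set ℝ), r ∈ Ioo (-T) T := by
    simp only [mem_insert_iff, mem_singleton_iff, forall_eq_or_imp, forall_eq, mem_Ioo]
    refine ⟨⟨?_, ?_⟩, ?_, ?_⟩ <;> cases abs_cases t <;> cases abs_cases t₀ <;> linarith
  exact ODE_solution_unique_of_mem_Icc hLip (hmem t₀ (by simp))
    (continuous_iff_continuousAt.2 fun s => (hF s).continuousAt).continuousOn (fun s _ => hF s)
    (fun _ _ => mem_univ _) continuousOn_const
    (fun s _ => by simpa using hasDerivAt_const s (0 : E))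
    (fun _ _ => mem_univ _) h₀ (Ioo_subset_Icc_self (hmem t (by simp)))

open ContinuousLinearMap in
theorem linear_ODE_of_double_burgers {u : ℝ × ℝ → ℝ} (hu : ContDiff ℝ 2 u)
    (hpde : ∀ p, Lop u (Lop u u) p = 0) {x : ℝ → ℝ} {a b : ℝ}
    (hx : ∀ s, HasDerivAt x (a * s + b) s) :
    ∃ M : ℝ → ℝ × ℝ →L[ℝ] ℝ × ℝ, Continuous M ∧ ∀ s,
      HasDerivAt (fun r => (u (x r, r) - (a * r + b), Lop u u (x r, r) - a))
        (M s (u (x s, s) - (a * s + b), Lop u u (x s, s) - a)) s := by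
  have hu₁ : ContDiff ℝ 1 u := hu.of_le one_le_two
  have hLu : ContDiff ℝ 1 (Lop u u) := contDiff_Lop hu₁ hu
  have hγ : Continuous fun s => (x s, s) :=
    (continuous_iff_continuousAt.2 fun s => (hx s).continuousAt).prodMk continuous_id
  set α := fun s => fderiv ℝ u (x s, s) (1, 0)
  set β := fun s => fderiv ℝ (Lop u u) (x s, s) (1, 0)
  have hα : Continuous α :=
    ((hu.continuous_fderiv two_ne_zero).comp hγ).clm_apply continuous_const
  have hβ : Continuous β :=
    ((hLu.continuous_fderiv one_ne_zero).comp hγ).clm_apply continuous_const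
  have hM : Continuous fun s => (snd ℝ ℝ ℝ - α s • fst ℝ ℝ ℝ, -β s • fst ℝ ℝ ℝ) := by
    fun_prop
  refine ⟨fun s => (snd ℝ ℝ ℝ - α s • fst ℝ ℝ ℝ).prod (-β s • fst ℝ ℝ ℝ),
    (prodₗᵢ ℝ).continuous.comp hM, fun s => ?_⟩
  have h₁ := (hasDerivAt_comp_graph (u := u) (hu₁.differentiable one_ne_zero _) (hx s)).sub
    (((hasDerivAt_id s).const_mul a).add_const b)
  have h₂ :=
    (hasDerivAt_comp_graph (u := u) (hLu.differentiable one_ne_zero _) (hx s)).sub_const a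
  refine (h₁.prodMk h₂).congr_deriv ?_
  simp only [hpde, prod_apply, sub_apply, smul_apply, coe_fst', coe_snd', Prod.mk.injEq, α, β]
  constructor <;> ring

theorem stmt0 (u : ℝ × ℝ → ℝ) (hu : ContDiff ℝ 2 u)
    (hpde : ∀ p : ℝ × ℝ, Lop u (Lop u u) p = 0)
    (A B : ℝ → ℝ) (hA : ∀ c, A c = Lop u u (c, 0)) (hB : ∀ c, B c = u (c, 0))
    (X : ℝ → ℝ → ℝ) (hX : ∀ c t, X c t = A c / 2 * t ^ 2 + B c * t + c) :
    ∀ c t : ℝ, u (X c t, t) = A c * t + B c := by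
  intro c t
  have hX' : ∀ s, HasDerivAt (X c) (A c * s + B c) s := by
    intro s
    have h := (((hasDerivAt_pow 2 s).const_mul (A c / 2)).add
      ((hasDerivAt_id' s).const_mul (B c))).add_const c
    rw [show X c = fun r => A c / 2 * r ^ 2 + B c * r + c from funext (hX c)]
    exact h.congr_deriv (by norm_num; ring)
  obtain ⟨M, hM, hF⟩ := linear_ODE_of_double_burgers hu hpde hX'
  have hF₀ : (u (X c 0, 0) - (A c * 0 + B c), Lop u u (X c 0, 0) - A c) = 0 := by
    simp [hX, hA, hB]
  simpa [sub_eq_zero] using congrArg Prod.fst (linear_ODE_solution_eq_zero hM hF hF₀ t)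
end

section
/- Let u : ℝ² → ℝ be a C¹ function (coordinates (x,t)) satisfying the inhomogeneous Burgers equation (L_u u)(x,t) = ∂u/∂t(x,t) + u(x,t)·∂u/∂x(x,t) = k for all (x,t) ∈ ℝ², where k ∈ ℝ is a constant. Then the function x ↦ u(x,0) is constant on ℝ. -/
open Real

theorem eq_exp_integral_smul_of_hasDerivAt {E : Type*} [NormedAddCommGroup E] [NormedSpace ℝ E]
    {c : ℝ → ℝ} {f : ℝ → E} (hc : Continuous c) (hf : ∀ t, HasDerivAt f (c t • f t) t) (t : ℝ) :
    f t = exp (∫ s in 0..t, c s) • f 0 := by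
  set I : ℝ → ℝ := fun t => ∫ s in 0..t, c s
  have hI : ∀ t, HasDerivAt I (c t) t := fun t => (hc.integral_hasStrictDerivAt 0 t).hasDerivAt
  have hg : ∀ t, HasDerivAt (fun t => exp (-I t) • f t) 0 t := fun t => by
    have h := ((hI t).neg.exp).fun_smul (hf t)
    rwa [smul_smul, ← add_smul, mul_neg, add_neg_cancel, zero_smul] at h
  have hconst := is_const_of_deriv_eq_zero (fun t => (hg t).differentiableAt)
    (fun t => (hg t).deriv) t 0
  simp only [I, intervalIntegral.integral_same, neg_zero, exp_zero, one_smul] at hconst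
  rw [← hconst, smul_smul, ← exp_add, add_neg_cancel, exp_zero, one_smul]

theorem fderiv_apply_eq_Lop_add {u : ℝ × ℝ → ℝ} (p : ℝ × ℝ) (v : ℝ) :
    fderiv ℝ u p (v, 1) = Lop u u p + (v - u p) * fderiv ℝ u p (1, 0) := by
  have hsplit : ((v, 1) : ℝ × ℝ) = v • ((1 : ℝ), (0 : ℝ)) + (0, 1) := by simp
  rw [hsplit, map_add, map_smul, Lop, smul_eq_mul]
  ring

theorem burgers_along_characteristic {u : ℝ × ℝ → ℝ} (hu : ContDiff ℝ 1 u) {k : ℝ}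
    (hpde : ∀ p, Lop u u p = k) (x₀ t : ℝ) :
    u (x₀ + u (x₀, 0) * t + k * t ^ 2 / 2, t) = u (x₀, 0) + k * t := by
  set a := u (x₀, 0)
  set γ : ℝ → ℝ × ℝ := fun t => (x₀ + a * t + k * t ^ 2 / 2, t)
  have hγ : ∀ t, HasDerivAt γ (a + k * t, 1) t := fun t => by
    have hx := (((hasDerivAt_id t).const_mul a).const_add x₀).add
      (((hasDerivAt_pow 2 t).const_mul k).div_const 2)
    refine HasDerivAt.prodMk (hx.congr_deriv ?_) (hasDerivAt_id t)
    norm_num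
    ring
  set f : ℝ → ℝ := fun t => u (γ t) - (a + k * t)
  have hf : ∀ t, HasDerivAt f ((-fderiv ℝ u (γ t) (1, 0)) • f t) t := fun t => by
    have h := (((hu.differentiable one_ne_zero) (γ t)).hasFDerivAt.comp_hasDerivAt t (hγ t)).sub
      (((hasDerivAt_id t).const_mul k).const_add a)
    refine h.congr_deriv ?_
    rw [fderiv_apply_eq_Lop_add, hpde, smul_eq_mul]
    simp only [f, mul_one]
    ring
  have hc : Continuous fun t => -fderiv ℝ u (γ t) (1, 0) := by
    have : Continuous γ := by fun_prop
    exact (((hu.continuous_fderiv one_ne_zero).comp this).clm_apply continuous_const).neg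
  have hf0 : f 0 = 0 := by simp [f, γ, a]
  have hft := eq_exp_integral_smul_of_hasDerivAt hc hf t
  rw [hf0, smul_zero] at hft
  simp only [f, γ] at hft
  linarith

theorem stmt5 (u : ℝ × ℝ → ℝ) (hu : ContDiff ℝ 1 u) (k : ℝ)
    (hpde : ∀ p : ℝ × ℝ, Lop u u p = k) :
    ∀ x y : ℝ, u (x, 0) = u (y, 0) := by
  intro x y
  by_contra hne
  -- the characteristics from `x` and `y` meet at time `t`
  set t := (y - x) / (u (x, 0) - u (y, 0))
  have hmeet : x + u (x, 0) * t + k * t ^ 2 / 2 = y + u (y, 0) * t + k * t ^ 2 / 2 := by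
    have : (u (x, 0) - u (y, 0)) * t = y - x := mul_div_cancel₀ _ (sub_ne_zero.2 hne)
    linarith
  have hx := burgers_along_characteristic hu hpde x t
  have hy := burgers_along_characteristic hu hpde y t
  rw [hmeet, hy] at hx
  exact hne (by linarith)
end

section
/- Let A, B : ℝ → ℝ be C¹ functions such that for every c ∈ ℝ either (A'(c) = 0 and B'(c) = 0) or B'(c)² < 2·A'(c). Define F : ℝ² → ℝ² by F(c,t) := ((A(c)/2)·t² + B(c)·t + c, t). Then F is injective and Ω := F(ℝ²) is an open subset of ℝ² containing the x-axis {(x,0) : x ∈ ℝ}. -/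
/-!
For fixed `t` the map `c ↦ x(c, t)` has derivative `A'(c)/2 · t² + B'(c) · t + 1`, which is
positive because the hypothesis on `A'(c), B'(c)` makes this quadratic in `t` either constant `1`
or of negative discriminant. So each `c ↦ x(c, t)` is a strictly increasing continuous map, which
gives injectivity of `F`. Openness of the range follows from the intermediate value theorem: if
`x(c₀ - 1, t₀) < x₀ < x(c₀ + 1, t₀)`, the same strict inequalities hold for `(x, t)` near
`(x₀, t₀)`, and then `x = x(c, t)` for some `c ∈ [c₀ - 1, c₀ + 1]`.
-/

open Set

theorem injective_prodMk_snd_of_injective_fiber {α β : Type*} {g : α × β → ℝ}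
    (hg : ∀ t, Function.Injective fun c => g (c, t)) :
    Function.Injective fun p : α × β => (g p, p.2) := by
  rintro ⟨c, t⟩ ⟨c', t'⟩ h
  obtain ⟨hx, rfl : t = t'⟩ := Prod.ext_iff.mp h
  rw [hg t hx]

theorem isOpen_range_prodMk_snd_of_strictMono_fiber {T : Type*} [TopologicalSpace T]
    {g : ℝ × T → ℝ} (hg : Continuous g)
    (hmono : ∀ t, StrictMono fun c => g (c, t)) :
    IsOpen (range fun p : ℝ × T => (g p, p.2)) := by
  rw [isOpen_iff_mem_nhds]
  rintro _ ⟨⟨c, t⟩, rfl⟩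
  have hcont (a : ℝ) : Continuous fun q : ℝ × T => g (a, q.2) := by fun_prop
  let U : Set (ℝ × T) := {q | g (c - 1, q.2) < q.1 ∧ q.1 < g (c + 1, q.2)}
  have hU : IsOpen U :=
    (isOpen_lt (hcont _) continuous_fst).inter (isOpen_lt continuous_fst (hcont _))
  have hmem : ((g (c, t), t) : ℝ × T) ∈ U :=
    ⟨hmono t (by linarith), hmono t (by linarith)⟩
  refine Filter.mem_of_superset (hU.mem_nhds hmem) ?_
  rintro ⟨x, s⟩ ⟨hlo, hhi⟩
  have hfiber : ContinuousOn (fun c => g (c, s)) (Icc (c - 1) (c + 1)) := by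
    fun_prop
  obtain ⟨c', -, hc'⟩ :=
    intermediate_value_Icc (by linarith) hfiber ⟨hlo.le, hhi.le⟩
  exact ⟨(c', s), by simp only [hc']⟩

theorem quadratic_pos_of_sq_lt_two_mul {a b : ℝ} (h : (a = 0 ∧ b = 0) ∨ b ^ 2 < 2 * a) (t : ℝ) :
    0 < a / 2 * t ^ 2 + b * t + 1 := by
  rcases h with ⟨rfl, rfl⟩ | h
  · norm_num
  · have ha : 0 < a := by nlinarith [sq_nonneg b]
    nlinarith [sq_nonneg (a * t + b)]

/-- The paper's `x(c, t)`. -/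
noncomputable def charParabola (A B : ℝ → ℝ) (c t : ℝ) : ℝ := A c / 2 * t ^ 2 + B c * t + c

section CharParabola

variable {A B : ℝ → ℝ}

theorem hasDerivAt_charParabola {a b c : ℝ} (hA : HasDerivAt A a c) (hB : HasDerivAt B b c)
    (t : ℝ) : HasDerivAt (fun c => charParabola A B c t) (a / 2 * t ^ 2 + b * t + 1) c :=
  (((hA.div_const 2).mul_const (t ^ 2)).add (hB.mul_const t)).add (hasDerivAt_id c)

theorem strictMono_charParabola (hA : Differentiable ℝ A) (hB : Differentiable ℝ B)
    (hcond : ∀ c, (deriv A c = 0 ∧ deriv B c = 0) ∨ deriv B c ^ 2 < 2 * deriv A c) (t : ℝ) :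
    StrictMono fun c => charParabola A B c t :=
  strictMono_of_deriv_pos fun c => by
    rw [(hasDerivAt_charParabola (hA c).hasDerivAt (hB c).hasDerivAt t).deriv]
    exact quadratic_pos_of_sq_lt_two_mul (hcond c) t

theorem continuous_charParabola (hA : Continuous A) (hB : Continuous B) :
    Continuous fun p : ℝ × ℝ => charParabola A B p.1 p.2 := by
  unfold charParabola
  fun_prop

end CharParabola

theorem stmt7 (A B : ℝ → ℝ) (hA : ContDiff ℝ 1 A) (hB : ContDiff ℝ 1 B)
    (hcond : ∀ c : ℝ, (deriv A c = 0 ∧ deriv B c = 0) ∨ (deriv B c) ^ 2 < 2 * deriv A c)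
    (F : ℝ × ℝ → ℝ × ℝ)
    (hF : ∀ c t : ℝ, F (c, t) = (A c / 2 * t ^ 2 + B c * t + c, t)) :
    Function.Injective F ∧ IsOpen (Set.range F) ∧
      ∀ x : ℝ, (x, (0 : ℝ)) ∈ Set.range F := by
  have hFeq : F = fun p : ℝ × ℝ => (charParabola A B p.1 p.2, p.2) :=
    funext fun ⟨c, t⟩ => hF c t
  have hmono := strictMono_charParabola (hA.differentiable one_ne_zero)
    (hB.differentiable one_ne_zero) hcond
  refine ⟨?_, ?_, fun x => ⟨(x, 0), by simp [hF]⟩⟩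
  · rw [hFeq]
    exact injective_prodMk_snd_of_injective_fiber fun t => (hmono t).injective
  · rw [hFeq]
    exact isOpen_range_prodMk_snd_of_strictMono_fiber
      (continuous_charParabola hA.continuous hB.continuous) hmono
end

section
/- Let A, B : ℝ → ℝ be C¹ functions with B'(c)² ≤ 2·A'(c) for all c ∈ ℝ (so that A is nondecreasing), and set x(c,t) := (A(c)/2)·t² + B(c)·t + c. If A is bounded on ℝ, then for every fixed t ∈ ℝ one has lim_{c→+∞} x(c,t) = +∞ and lim_{c→−∞} x(c,t) = −∞; consequently c ↦ x(c,t) is a surjection of ℝ onto ℝ and {(x(c,t), t) : c, t ∈ ℝ} = ℝ². -/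
/-!
By AM-GM, `B'² ≤ 2A'` gives `|B'| ≤ ε A' + 1/(2ε)` for every `ε > 0`, so `B` grows at most like
`ε (A c - A 0) + |c|/(2ε)`. Since `A` is bounded, choosing `ε = |t| + 1` makes the term `B(c) t` of
`x(c,t) - c` at most `|c|/2` plus a constant, while `A(c) t²/2` is bounded. Hence `x(c,t)` lies
within `|c|/2 + K(t)` of `c`, tends to `±∞` with `c`, and is onto by the intermediate value theorem.
-/

open Filter

theorem abs_sub_le_sub_of_abs_deriv_le {f g : ℝ → ℝ} (hf : Differentiable ℝ f)
    (hg : Differentiable ℝ g) (hfg : ∀ x, |deriv g x| ≤ deriv f x) {a b : ℝ} (hab : a ≤ b) :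
    |g b - g a| ≤ f b - f a := by
  have hsub : Monotone (f - g) := monotone_of_deriv_nonneg (hf.sub hg) fun x => by
    rw [deriv_sub (hf x) (hg x)]
    linarith [le_abs_self (deriv g x), hfg x]
  have hadd : Monotone (f + g) := monotone_of_deriv_nonneg (hf.add hg) fun x => by
    rw [deriv_add (hf x) (hg x)]
    linarith [neg_abs_le (deriv g x), hfg x]
  have h₁ := hsub hab
  have h₂ := hadd hab
  simp only [Pi.sub_apply, Pi.add_apply] at h₁ h₂
  rw [abs_sub_le_iff]
  constructor <;> linarith

theorem abs_le_mul_add_inv_of_sq_le {u v ε : ℝ} (huv : u ^ 2 ≤ 2 * v) (hε : 0 < ε) :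
    |u| ≤ ε * v + 1 / (2 * ε) := by
  rw [← sub_nonneg]
  have key : ε * v + 1 / (2 * ε) - |u| = ((ε * |u| - 1) ^ 2 + ε ^ 2 * (2 * v - u ^ 2)) / (2 * ε) := by
    field_simp
    rw [← sq_abs u]
    ring
  rw [key]
  have : 0 ≤ 2 * v - u ^ 2 := by linarith
  positivity

section SqDerivLe

variable {A B : ℝ → ℝ} (hA : Differentiable ℝ A) (hB : Differentiable ℝ B)
  (hcond : ∀ c, deriv B c ^ 2 ≤ 2 * deriv A c)
include hA hB hcond

theorem abs_sub_le_of_sq_deriv_le {ε a b : ℝ} (hε : 0 < ε) (hab : a ≤ b) :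
    |B b - B a| ≤ ε * (A b - A a) + (b - a) / (2 * ε) := by
  have hf : Differentiable ℝ fun x => ε * A x + x / (2 * ε) :=
    (hA.const_mul ε).add (differentiable_id.div_const _)
  have hbound : ∀ x, |deriv B x| ≤ deriv (fun x => ε * A x + x / (2 * ε)) x := fun x => by
    have hderiv : deriv (fun x => ε * A x + x / (2 * ε)) x = ε * deriv A x + 1 / (2 * ε) := by
      simpa using (((hA x).hasDerivAt.const_mul ε).fun_add ((hasDerivAt_id x).div_const (2 * ε))).deriv
    rw [hderiv]
    exact abs_le_mul_add_inv_of_sq_le (hcond x) hε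
  calc |B b - B a| ≤ ε * A b + b / (2 * ε) - (ε * A a + a / (2 * ε)) :=
        abs_sub_le_sub_of_abs_deriv_le hf hB hbound hab
    _ = ε * (A b - A a) + (b - a) / (2 * ε) := by ring

theorem abs_le_of_sq_deriv_le_of_abs_le {M ε : ℝ} (hM : ∀ c, |A c| ≤ M) (hε : 0 < ε) (c : ℝ) :
    |B c| ≤ |B 0| + 2 * M * ε + |c| / (2 * ε) := by
  have hosc : ∀ a b, A b - A a ≤ 2 * M := fun a b => by
    linarith [le_abs_self (A b), neg_abs_le (A a), hM a, hM b]
  have hdiff : |B c - B 0| ≤ ε * (2 * M) + |c| / (2 * ε) := by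
    rcases le_total 0 c with hc | hc
    · have h := abs_sub_le_of_sq_deriv_le hA hB hcond hε hc
      rw [sub_zero] at h
      rw [abs_of_nonneg hc]
      nlinarith [hosc 0 c]
    · have h := abs_sub_le_of_sq_deriv_le hA hB hcond hε hc
      rw [zero_sub, abs_sub_comm] at h
      rw [abs_of_nonpos hc]
      nlinarith [hosc c 0]
  linarith [abs_sub_abs_le_abs_sub (B c) (B 0)]

theorem exists_abs_parabola_sub_le {M : ℝ} (hM : ∀ c, |A c| ≤ M) (t : ℝ) :
    ∃ K, ∀ c, |A c / 2 * t ^ 2 + B c * t| ≤ |c| / 2 + K := by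
  refine ⟨M / 2 * t ^ 2 + (|B 0| + 2 * M * (|t| + 1)) * |t|, fun c => ?_⟩
  have hε : (0 : ℝ) < |t| + 1 := by positivity
  have hBc := abs_le_of_sq_deriv_le_of_abs_le hA hB hcond hM hε c
  have hshrink : |c| / (2 * (|t| + 1)) * |t| ≤ |c| / 2 := by
    rw [div_mul_eq_mul_div, div_le_div_iff₀ (by positivity) two_pos]
    nlinarith [abs_nonneg c, abs_nonneg t]
  calc |A c / 2 * t ^ 2 + B c * t| ≤ |A c| / 2 * t ^ 2 + |B c| * |t| := by
        refine (abs_add_le _ _).trans_eq ?_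
        rw [abs_mul, abs_mul, abs_div, abs_two, abs_of_nonneg (sq_nonneg t)]
    _ ≤ M / 2 * t ^ 2 + (|B 0| + 2 * M * (|t| + 1) + |c| / (2 * (|t| + 1))) * |t| := by
        gcongr
        · exact hM c
    _ ≤ |c| / 2 + (M / 2 * t ^ 2 + (|B 0| + 2 * M * (|t| + 1)) * |t|) := by
        nlinarith

end SqDerivLe

theorem tendsto_atTop_atTop_of_abs_sub_id_le {f : ℝ → ℝ} {r K : ℝ} (hr : r < 1)
    (hf : ∀ c, |f c - c| ≤ r * |c| + K) : Tendsto f atTop atTop := by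
  have hlin : Tendsto (fun c => (1 - r) * c - K) atTop atTop :=
    tendsto_atTop_add_const_right _ _ (tendsto_id.const_mul_atTop (by linarith))
  refine tendsto_atTop_mono' _ ?_ hlin
  filter_upwards [eventually_ge_atTop 0] with c hc
  have := hf c
  rw [abs_of_nonneg hc, abs_le] at this
  linarith

theorem tendsto_atBot_atBot_of_abs_sub_id_le {f : ℝ → ℝ} {r K : ℝ} (hr : r < 1)
    (hf : ∀ c, |f c - c| ≤ r * |c| + K) : Tendsto f atBot atBot := by
  have hlin : Tendsto (fun c => (1 - r) * c + K) atBot atBot :=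
    tendsto_atBot_add_const_right _ _ (tendsto_id.const_mul_atBot (by linarith))
  refine tendsto_atBot_mono' _ ?_ hlin
  filter_upwards [eventually_le_atBot 0] with c hc
  have := hf c
  rw [abs_of_nonpos hc, abs_le] at this
  linarith

theorem stmt8 (A B : ℝ → ℝ) (hA : ContDiff ℝ 1 A) (hB : ContDiff ℝ 1 B)
    (hcond : ∀ c : ℝ, (deriv B c) ^ 2 ≤ 2 * deriv A c)
    (hbdd : ∃ M : ℝ, ∀ c : ℝ, |A c| ≤ M)
    (X : ℝ → ℝ → ℝ) (hX : ∀ c t, X c t = A c / 2 * t ^ 2 + B c * t + c) :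
    (∀ t : ℝ, Filter.Tendsto (fun c => X c t) Filter.atTop Filter.atTop) ∧
    (∀ t : ℝ, Filter.Tendsto (fun c => X c t) Filter.atBot Filter.atBot) ∧
    (∀ t : ℝ, Function.Surjective fun c => X c t) ∧
    {p : ℝ × ℝ | ∃ c t : ℝ, p = (X c t, t)} = Set.univ := by
  obtain ⟨M, hM⟩ := hbdd
  have hclose : ∀ t, ∃ K, ∀ c, |X c t - c| ≤ 1 / 2 * |c| + K := fun t => by
    obtain ⟨K, hK⟩ := exists_abs_parabola_sub_le (hA.differentiable one_ne_zero)
      (hB.differentiable one_ne_zero) hcond hM t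
    exact ⟨K, fun c => by rw [hX, add_sub_cancel_right]; linarith [hK c]⟩
  have htop : ∀ t, Tendsto (fun c => X c t) atTop atTop := fun t =>
    (hclose t).elim fun _ hK => tendsto_atTop_atTop_of_abs_sub_id_le (by norm_num) hK
  have hbot : ∀ t, Tendsto (fun c => X c t) atBot atBot := fun t =>
    (hclose t).elim fun _ hK => tendsto_atBot_atBot_of_abs_sub_id_le (by norm_num) hK
  have hsurj : ∀ t, Function.Surjective fun c => X c t := fun t => by
    have hcont : Continuous fun c => X c t := by
      have := hA.continuous
      have := hB.continuous
      simp only [hX]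
      fun_prop
    exact hcont.surjective (htop t) (hbot t)
  refine ⟨htop, hbot, hsurj, Set.eq_univ_of_forall fun ⟨x, t⟩ => ?_⟩
  obtain ⟨c, rfl⟩ := hsurj t x
  exact ⟨c, t, rfl⟩
end

section
/- Let A, B : ℝ → ℝ be differentiable functions such that B'(s)² ≤ 2·A'(s) for all s ∈ ℝ. Then for every c ∈ ℝ one has (B(c) − B(0))² ≤ 2·|c|·|A(c) − A(0)|. -/
lemma key9 (A B : ℝ → ℝ) (hA : Differentiable ℝ A) (hB : Differentiable ℝ B)
    (hcond : ∀ s : ℝ, (deriv B s) ^ 2 ≤ 2 * deriv A s) (l : ℝ) (hl : 0 < l)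
    (a b : ℝ) (hab : a ≤ b) :
    B b - B a ≤ (A b - A a) / l + l * (b - a) / 2 := by
  have hmono : Monotone (fun x => A x / l + l * x / 2 - B x) := by
    apply monotone_of_deriv_nonneg
    · fun_prop
    · intro x
      have h1 : HasDerivAt (fun x => A x / l + l * x / 2 - B x)
          (deriv A x / l + l * 1 / 2 - deriv B x) x :=
        (((hA x).hasDerivAt.div_const l).add
          (((hasDerivAt_id x).const_mul l).div_const 2)).sub (hB x).hasDerivAt
      rw [h1.deriv]
      have h2 := hcond x
      have h3 := sq_nonneg (deriv B x - l)
      have h5 : deriv B x ≤ deriv A x / l + l * 1 / 2 := by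
        rw [div_add_div _ _ hl.ne' (by norm_num : (2:ℝ) ≠ 0),
          le_div_iff₀ (by positivity)]
        nlinarith
      linarith
  have h := hmono hab
  simp only at h
  rw [sub_div]
  linarith

lemma conclude9 (x D c : ℝ) (hc : 0 ≤ c) (hD : 0 ≤ D) (hx : 0 ≤ x)
    (h : ∀ l : ℝ, 0 < l → x ≤ D / l + l * c / 2) : x ^ 2 ≤ 2 * c * D := by
  rcases eq_or_lt_of_le hx with hx0 | hx0
  · nlinarith
  rcases eq_or_lt_of_le hc with hc0 | hc0
  · -- c = 0 : x ≤ D/l for all l, take l = 2D/x + 1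
    exfalso
    have hl : 0 < 2 * D / x + 1 := by positivity
    have := h _ hl
    rw [← hc0] at this
    simp only [mul_zero, zero_mul, zero_div, mul_comm, mul_zero, add_zero] at this
    rw [le_div_iff₀ (by positivity)] at this
    have hid : x * (D * 2 / x) = D * 2 := by field_simp
    have hexp : x * (D * 2 / x + 1) = x * (D * 2 / x) + x := by ring
    linarith
  · have hl : 0 < x / c := by positivity
    have := h _ hl
    rw [div_div_eq_mul_div, div_mul_cancel₀ x hc0.ne'] at this
    have h6 : x / 2 ≤ D * c / x := by linarith
    rw [div_le_div_iff₀ (by norm_num) hx0] at h6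
    nlinarith

theorem stmt9 (A B : ℝ → ℝ) (hA : Differentiable ℝ A) (hB : Differentiable ℝ B)
    (hcond : ∀ s : ℝ, (deriv B s) ^ 2 ≤ 2 * deriv A s) :
    ∀ c : ℝ, (B c - B 0) ^ 2 ≤ 2 * |c| * |A c - A 0| := by
  intro c
  have hBneg : Differentiable ℝ (fun x => -B x) := hB.neg
  have hcondneg : ∀ s : ℝ, (deriv (fun x => -B x) s) ^ 2 ≤ 2 * deriv A s := by
    intro s
    have : deriv (fun x => -B x) s = -deriv B s := deriv.neg
    rw [this]
    simpa using hcond s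
  -- A is monotone
  have hAmono : Monotone A := by
    apply monotone_of_deriv_nonneg hA
    intro x
    nlinarith [hcond x, sq_nonneg (deriv B x)]
  rcases le_total 0 c with hc | hc
  · have hAc : 0 ≤ A c - A 0 := by have := hAmono hc; linarith
    rw [abs_of_nonneg hc, abs_of_nonneg hAc]
    have key : ∀ l : ℝ, 0 < l → |B c - B 0| ≤ (A c - A 0) / l + l * c / 2 := by
      intro l hl
      rcases abs_cases (B c - B 0) with ⟨he, _⟩ | ⟨he, _⟩ <;> rw [he]
      · have := key9 A B hA hB hcond l hl 0 c hc
        simpa using this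
      · have := key9 A (fun x => -B x) hA hBneg hcondneg l hl 0 c hc
        linarith [this]
    have := conclude9 |B c - B 0| (A c - A 0) c hc hAc (abs_nonneg _) key
    calc (B c - B 0) ^ 2 = |B c - B 0| ^ 2 := (sq_abs _).symm
      _ ≤ 2 * c * (A c - A 0) := this
  · have hAc : A c - A 0 ≤ 0 := by have := hAmono hc; linarith
    rw [abs_of_nonpos hc, abs_of_nonpos hAc]
    have key : ∀ l : ℝ, 0 < l → |B c - B 0| ≤ (A 0 - A c) / l + l * (-c) / 2 := by
      intro l hl
      rcases abs_cases (B c - B 0) with ⟨he, _⟩ | ⟨he, _⟩ <;> rw [he]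
      · have := key9 A (fun x => -B x) hA hBneg hcondneg l hl c 0 hc
        have h2 : -(B 0) - -(B c) = B c - B 0 := by ring
        rw [h2] at this
        linarith [this]
      · have := key9 A B hA hB hcond l hl c 0 hc
        linarith [this]
    have := conclude9 |B c - B 0| (A 0 - A c) (-c) (by linarith) (by linarith)
      (abs_nonneg _) key
    calc (B c - B 0) ^ 2 = |B c - B 0| ^ 2 := (sq_abs _).symm
      _ ≤ 2 * (-c) * (A 0 - A c) := this
      _ = 2 * -c * -(A c - A 0) := by ring
end

section
/- Fix α > 0 and define u : ℝ² → ℝ by u(x,t) := 2αxt/(2 + αt²). Then u is smooth, solves the double Burgers equation L_u(L_u u) = 0 on all of ℝ², and satisfies u(x,0) = 0 and (L_u u)(x,0) = αx for all x ∈ ℝ. In particular, there exist entire C² solutions of L_u(L_u u) = 0 that are not of the form u(x,t) = A·t + B with constants A, B. -/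
lemma hDpos (α : ℝ) (hα : 0 < α) (t : ℝ) : (0:ℝ) < 2 + α * t ^ 2 := by positivity

lemma hasF1 (α : ℝ) (hα : 0 < α) (p : ℝ × ℝ) :
    HasFDerivAt (fun p : ℝ × ℝ => 2 * α * p.1 * p.2 / (2 + α * p.2 ^ 2))
      ((2 * α * p.2 / (2 + α * p.2 ^ 2)) • ContinuousLinearMap.fst ℝ ℝ ℝ
        + (2 * α * p.1 * (2 - α * p.2 ^ 2) / (2 + α * p.2 ^ 2) ^ 2) • ContinuousLinearMap.snd ℝ ℝ ℝ) p := by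
  have hD : (2 + α * p.2 ^ 2) ≠ 0 := (hDpos α hα p.2).ne'
  have hN : HasFDerivAt (fun p : ℝ × ℝ => 2 * α * p.1 * p.2)
      ((2*α) • (p.1 • ContinuousLinearMap.snd ℝ ℝ ℝ + p.2 • ContinuousLinearMap.fst ℝ ℝ ℝ)) p := by
    have := ((hasFDerivAt_fst (𝕜 := ℝ) (p := p)).mul (hasFDerivAt_snd (𝕜 := ℝ) (p := p))).const_mul (2*α)
    exact this.congr_of_eventuallyEq (Filter.Eventually.of_forall fun x => by simp only [Pi.mul_apply]; ring)
  have hden : HasDerivAt (fun s : ℝ => 2 + α * s ^ 2) (α * ((2:ℕ) * p.2 ^ 1)) p.2 :=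
    ((hasDerivAt_pow 2 p.2).const_mul α).const_add 2
  have hDen : HasFDerivAt (fun q : ℝ × ℝ => 2 + α * q.2 ^ 2)
      ((α * ((2:ℕ) * p.2 ^ 1)) • ContinuousLinearMap.snd ℝ ℝ ℝ) p := by
    simpa [Function.comp_def] using hden.comp_hasFDerivAt p (hasFDerivAt_snd (𝕜 := ℝ) (p := p))
  have hInv : HasFDerivAt (fun q : ℝ × ℝ => (2 + α * q.2 ^ 2)⁻¹)
      (-(((2 + α * p.2 ^ 2) ^ 2)⁻¹ • ((α * ((2:ℕ) * p.2 ^ 1)) • ContinuousLinearMap.snd ℝ ℝ ℝ))) p := by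
    simpa [Function.comp_def] using (hasDerivAt_inv hD).comp_hasFDerivAt p hDen
  have h := hN.mul hInv
  simp only [div_eq_mul_inv]
  refine h.congr_fderiv ?_
  refine ContinuousLinearMap.ext fun v => ?_
  simp only [ContinuousLinearMap.add_apply, ContinuousLinearMap.smul_apply,
    ContinuousLinearMap.neg_apply, ContinuousLinearMap.coe_fst', ContinuousLinearMap.coe_snd',
    smul_eq_mul]
  field_simp
  ring

lemma hasF2 (α : ℝ) (hα : 0 < α) (p : ℝ × ℝ) :
    HasFDerivAt (fun p : ℝ × ℝ => 2 * α * p.1 / (2 + α * p.2 ^ 2))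
      ((2 * α / (2 + α * p.2 ^ 2)) • ContinuousLinearMap.fst ℝ ℝ ℝ
        + (-(4 * α ^ 2 * p.1 * p.2) / (2 + α * p.2 ^ 2) ^ 2) • ContinuousLinearMap.snd ℝ ℝ ℝ) p := by
  have hD : (2 + α * p.2 ^ 2) ≠ 0 := (hDpos α hα p.2).ne'
  have hN : HasFDerivAt (fun p : ℝ × ℝ => 2 * α * p.1)
      ((2*α) • ContinuousLinearMap.fst ℝ ℝ ℝ) p :=
    (hasFDerivAt_fst (𝕜 := ℝ) (p := p)).const_mul (2*α)
  have hden : HasDerivAt (fun s : ℝ => 2 + α * s ^ 2) (α * ((2:ℕ) * p.2 ^ 1)) p.2 :=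
    ((hasDerivAt_pow 2 p.2).const_mul α).const_add 2
  have hDen : HasFDerivAt (fun q : ℝ × ℝ => 2 + α * q.2 ^ 2)
      ((α * ((2:ℕ) * p.2 ^ 1)) • ContinuousLinearMap.snd ℝ ℝ ℝ) p := by
    simpa [Function.comp_def] using hden.comp_hasFDerivAt p (hasFDerivAt_snd (𝕜 := ℝ) (p := p))
  have hInv : HasFDerivAt (fun q : ℝ × ℝ => (2 + α * q.2 ^ 2)⁻¹)
      (-(((2 + α * p.2 ^ 2) ^ 2)⁻¹ • ((α * ((2:ℕ) * p.2 ^ 1)) • ContinuousLinearMap.snd ℝ ℝ ℝ))) p := by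
    simpa [Function.comp_def] using (hasDerivAt_inv hD).comp_hasFDerivAt p hDen
  have h := hN.mul hInv
  simp only [div_eq_mul_inv]
  refine h.congr_fderiv ?_
  refine ContinuousLinearMap.ext fun v => ?_
  simp only [ContinuousLinearMap.add_apply, ContinuousLinearMap.smul_apply,
    ContinuousLinearMap.neg_apply, ContinuousLinearMap.coe_fst', ContinuousLinearMap.coe_snd',
    smul_eq_mul]
  field_simp
  ring

theorem stmt14 (α : ℝ) (hα : 0 < α) (u : ℝ × ℝ → ℝ)
    (hu : ∀ x t : ℝ, u (x, t) = 2 * α * x * t / (2 + α * t ^ 2)) :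
    ContDiff ℝ (⊤ : ℕ∞) u ∧ (∀ p : ℝ × ℝ, Lop u (Lop u u) p = 0) ∧
    (∀ x : ℝ, u (x, 0) = 0) ∧ (∀ x : ℝ, Lop u u (x, 0) = α * x) ∧
    ¬ ∃ a b : ℝ, ∀ x t : ℝ, u (x, t) = a * t + b := by
  have hue : u = fun p : ℝ × ℝ => 2 * α * p.1 * p.2 / (2 + α * p.2 ^ 2) := by
    funext p
    have := hu p.1 p.2
    simpa using this
  subst hue
  have hD : ∀ t : ℝ, (2 + α * t ^ 2) ≠ 0 := fun t => (hDpos α hα t).ne'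
  -- fderiv values
  have key1 : ∀ p : ℝ × ℝ,
      Lop (fun p : ℝ × ℝ => 2 * α * p.1 * p.2 / (2 + α * p.2 ^ 2))
        (fun p : ℝ × ℝ => 2 * α * p.1 * p.2 / (2 + α * p.2 ^ 2)) p
      = 2 * α * p.1 / (2 + α * p.2 ^ 2) := by
    intro p
    have h := (hasF1 α hα p).fderiv
    simp only [Lop, h]
    simp [ContinuousLinearMap.smul_apply]
    field_simp
    ring
  have key2 : ∀ p : ℝ × ℝ,
      Lop (fun p : ℝ × ℝ => 2 * α * p.1 * p.2 / (2 + α * p.2 ^ 2))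
        (fun p : ℝ × ℝ => 2 * α * p.1 / (2 + α * p.2 ^ 2)) p = 0 := by
    intro p
    have h := (hasF2 α hα p).fderiv
    simp only [Lop, h]
    simp [ContinuousLinearMap.smul_apply]
    field_simp
    ring
  refine ⟨?_, ?_, ?_, ?_, ?_⟩
  · -- smoothness
    apply ContDiff.div
    · fun_prop
    · fun_prop
    · intro p; exact hD p.2
  · intro p
    have : Lop (fun p : ℝ × ℝ => 2 * α * p.1 * p.2 / (2 + α * p.2 ^ 2))
        (fun p : ℝ × ℝ => 2 * α * p.1 * p.2 / (2 + α * p.2 ^ 2))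
        = fun p : ℝ × ℝ => 2 * α * p.1 / (2 + α * p.2 ^ 2) := funext key1
    rw [this]
    exact key2 p
  · intro x; norm_num
  · intro x
    have := key1 (x, 0)
    simp at this ⊢
    rw [this]
    ring
  · rintro ⟨a, b, h⟩
    have h10 := h 1 0
    have h11 := h 1 1
    have h21 := h 2 1
    norm_num at h10 h11 h21
    have hD1 : (0:ℝ) < 2 + α := by linarith
    have heq : 2 * α / (2 + α) = 2 * α * 2 / (2 + α) := h11.trans h21.symm
    rw [div_eq_div_iff hD1.ne' hD1.ne'] at heq
    nlinarith
end

section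
/- Let a > 0 and b ∈ ℝ satisfy b² < 2a, and let h(t) := (a/2)·t² + b·t + 1. Then there exists a C¹ function ζ : ℝ → ℝ with compact support such that ∫_ℝ ζ'(t)²·h(t) dt < (2a − b²)·∫_ℝ ζ(t)²/h(t) dt. In other words, the Hardy-type inequality ∫_ℝ ζ'² h dt ≥ (2a − b²)·∫_ℝ ζ²/h dt for all compactly supported C¹ functions ζ fails. -/
/-!
The substitution `v = (a t + b) / s` with `s = √(2a - b²)` turns `h` into
`s² / (2a) · (1 + v²)`, and both sides of the inequality become `s / 2` times
`∫ φ'² (1 + v²)` and `4 ∫ φ² / (1 + v²)` respectively. The claim thus reduces to a single,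
parameter-free test function. For `φ = ((3 - v²)₊)²` both integrals are elementary:
`∫ φ'² (1 + v²) = 4608 √3 / 35` and `∫ φ² / (1 + v²) = 512 π / 3 - 8928 √3 / 35`
(the latter through `(3 - v²)⁴ = 256 + (1 + v²) · (polynomial)`), and
`1152 √3 < 2048 π / 3` already follows from `√3 < 1.74` and `π > 3`.
-/

open MeasureTheory Real Set Topology

lemma hasDerivAt_max_zero_sq (x : ℝ) :
    HasDerivAt (fun y : ℝ => max y 0 ^ 2) (2 * max x 0) x := by
  refine hasDerivAt_of_hasDerivAt_of_ne' (f := fun y : ℝ => max y 0 ^ 2)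
    (g := fun y => 2 * max y 0) (x := 0) (fun y hy => ?_) (by fun_prop) (by fun_prop) x
  rcases hy.lt_or_gt with hy | hy
  · have hloc : (fun y : ℝ => max y 0 ^ 2) =ᶠ[𝓝 y] fun _ => 0 := by
      filter_upwards [Iio_mem_nhds hy] with z hz
      simp [max_eq_right (mem_Iio.1 hz).le]
    rw [max_eq_right hy.le, mul_zero]
    exact (hasDerivAt_const y 0).congr_of_eventuallyEq hloc
  · have hloc : (fun y : ℝ => max y 0 ^ 2) =ᶠ[𝓝 y] fun z => z ^ 2 := by
      filter_upwards [Ioi_mem_nhds hy] with z hz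
      rw [max_eq_left (mem_Ioi.1 hz).le]
    rw [max_eq_left hy.le]
    simpa using (hasDerivAt_pow 2 y).congr_of_eventuallyEq hloc

lemma contDiff_max_zero_sq : ContDiff ℝ 1 (fun y : ℝ => max y 0 ^ 2) := by
  rw [contDiff_one_iff_deriv]
  refine ⟨fun x => (hasDerivAt_max_zero_sq x).differentiableAt, ?_⟩
  rw [funext fun x => (hasDerivAt_max_zero_sq x).deriv]
  fun_prop

lemma integral_comp_mul_add (g : ℝ → ℝ) (c d : ℝ) :
    ∫ t, g (c * t + d) = |c⁻¹| * ∫ v, g v := by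
  rw [Measure.integral_comp_mul_left (fun v => g (v + d)), integral_add_right_eq_self, smul_eq_mul]

lemma integral_eq_intervalIntegral_of_eqOn {g p : ℝ → ℝ} {r : ℝ} (hr : 0 ≤ r)
    (hout : ∀ v, r ^ 2 ≤ v ^ 2 → g v = 0) (hin : ∀ v, v ^ 2 ≤ r ^ 2 → g v = p v) :
    ∫ v, g v = ∫ v in -r..r, p v := by
  rw [← intervalIntegral.integral_eq_integral_of_support_subset]
  · refine intervalIntegral.integral_congr fun v hv => hin v ?_
    rw [uIcc_of_le (by linarith), mem_Icc] at hv
    nlinarith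
  · intro v hv
    by_contra hmem
    refine hv (hout v ?_)
    rw [mem_Ioc, not_and_or, not_lt, not_le] at hmem
    rcases hmem with h | h <;> nlinarith

/-- The support radius `√3` is large enough for the weighted Rayleigh quotient to drop below `4`,
and it makes the boundary term `arctan √3 = π / 3` explicit. -/
def hardyBump (v : ℝ) : ℝ := max (3 - v ^ 2) 0 ^ 2

lemma hasDerivAt_hardyBump (v : ℝ) :
    HasDerivAt hardyBump (-4 * v * max (3 - v ^ 2) 0) v := by
  refine ((hasDerivAt_max_zero_sq (3 - v ^ 2)).comp v
    ((hasDerivAt_pow 2 v).const_sub 3)).congr_deriv ?_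
  push_cast
  ring

lemma contDiff_hardyBump : ContDiff ℝ 1 hardyBump :=
  contDiff_max_zero_sq.comp (by fun_prop)

lemma hasCompactSupport_hardyBump : HasCompactSupport hardyBump := by
  refine HasCompactSupport.intro (isCompact_Icc (a := -2) (b := 2)) fun v hv => ?_
  have h4 : 4 < v ^ 2 := by
    rw [mem_Icc, not_and_or, not_le, not_le] at hv
    rcases hv with h | h <;> nlinarith
  simp [hardyBump, max_eq_right (show 3 - v ^ 2 ≤ 0 by linarith)]

lemma integral_deriv_hardyBump_sq_mul :
    ∫ v, deriv hardyBump v ^ 2 * (1 + v ^ 2) = 4608 / 35 * √3 := by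
  have hr2 : √3 ^ 2 = 3 := sq_sqrt (by norm_num)
  rw [integral_eq_intervalIntegral_of_eqOn
    (p := fun v => 16 * (9 * v ^ 2 + 3 * v ^ 4 - 5 * v ^ 6 + v ^ 8)) (sqrt_nonneg 3)]
  · rw [intervalIntegral.integral_eq_sub_of_hasDerivAt
      (f := fun v => 16 * (3 * v ^ 3 + 3 / 5 * v ^ 5 - 5 / 7 * v ^ 7 + 1 / 9 * v ^ 9))
      (fun x _ => by
        refine (((((hasDerivAt_pow 3 x).const_mul 3).add
          ((hasDerivAt_pow 5 x).const_mul (3 / 5))).sub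
          ((hasDerivAt_pow 7 x).const_mul (5 / 7))).add
          ((hasDerivAt_pow 9 x).const_mul (1 / 9))).const_mul 16 |>.congr_deriv ?_
        push_cast
        ring)
      ((by fun_prop : Continuous _).intervalIntegrable _ _)]
    linear_combination
      (16 * (2 / 9 * √3 ^ 7 - 16 / 21 * √3 ^ 5 - 38 / 35 * √3 ^ 3 + 96 / 35 * √3)) * hr2
  · intro v hv
    rw [(hasDerivAt_hardyBump v).deriv, max_eq_right (by linarith)]
    ring
  · intro v hv
    rw [(hasDerivAt_hardyBump v).deriv, max_eq_left (by linarith)]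
    ring

lemma integral_hardyBump_sq_div :
    ∫ v, hardyBump v ^ 2 / (1 + v ^ 2) = 512 * π / 3 - 8928 / 35 * √3 := by
  have hr2 : √3 ^ 2 = 3 := sq_sqrt (by norm_num)
  have harctan : arctan √3 = π / 3 := by
    rw [← tan_pi_div_three]
    exact arctan_tan (by linarith [pi_pos]) (by linarith [pi_pos])
  rw [integral_eq_intervalIntegral_of_eqOn
    (p := fun v => 256 * (1 + v ^ 2)⁻¹ - 175 + 67 * v ^ 2 - 13 * v ^ 4 + v ^ 6) (sqrt_nonneg 3)]
  · rw [intervalIntegral.integral_eq_sub_of_hasDerivAt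
      (f := fun v => 256 * arctan v - 175 * v + 67 / 3 * v ^ 3 - 13 / 5 * v ^ 5 + 1 / 7 * v ^ 7)
      (fun x _ => by
        refine (((((hasDerivAt_arctan x).const_mul 256).sub
          ((hasDerivAt_id' x).const_mul 175)).add
          ((hasDerivAt_pow 3 x).const_mul (67 / 3))).sub
          ((hasDerivAt_pow 5 x).const_mul (13 / 5))).add
          ((hasDerivAt_pow 7 x).const_mul (1 / 7)) |>.congr_deriv ?_
        push_cast
        ring)
      ((by fun_prop (disch := intro; positivity) : Continuous _).intervalIntegrable _ _)]
    simp only [arctan_neg, harctan]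
    linear_combination (2 / 7 * √3 ^ 5 - 152 / 35 * √3 ^ 3 + 3322 / 105 * √3) * hr2
  · intro v hv
    simp [hardyBump, max_eq_right (show 3 - v ^ 2 ≤ 0 by linarith)]
  · intro v hv
    have : 1 + v ^ 2 ≠ 0 := by positivity
    simp only [hardyBump, max_eq_left (show 0 ≤ 3 - v ^ 2 by linarith)]
    field_simp
    ring

lemma integral_deriv_hardyBump_sq_mul_lt :
    ∫ v, deriv hardyBump v ^ 2 * (1 + v ^ 2) < 4 * ∫ v, hardyBump v ^ 2 / (1 + v ^ 2) := by
  have hsqrt : √3 < 1.74 := (sqrt_lt' (by norm_num)).2 (by norm_num)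
  rw [integral_deriv_hardyBump_sq_mul, integral_hardyBump_sq_div]
  linarith [pi_gt_three]

section Rescaling

variable {a b s : ℝ}

lemma quadratic_eq_mul_one_add_sq (ha : a ≠ 0) (hs : s ≠ 0) (hs2 : s ^ 2 = 2 * a - b ^ 2)
    (t : ℝ) :
    a / 2 * t ^ 2 + b * t + 1 = s ^ 2 / (2 * a) * (1 + (a / s * t + b / s) ^ 2) := by
  field_simp
  linear_combination (-1) * hs2

lemma integral_deriv_comp_sq_mul_quadratic (ha : 0 < a) (hs : 0 < s) (hs2 : s ^ 2 = 2 * a - b ^ 2)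
    {φ : ℝ → ℝ} (hφ : Differentiable ℝ φ) :
    ∫ t, deriv (fun t => φ (a / s * t + b / s)) t ^ 2 * (a / 2 * t ^ 2 + b * t + 1) =
      s / 2 * ∫ v, deriv φ v ^ 2 * (1 + v ^ 2) := by
  have hderiv (t : ℝ) :
      deriv (fun t => φ (a / s * t + b / s)) t = deriv φ (a / s * t + b / s) * (a / s) :=
    ((hφ _).hasDerivAt.comp t
      (((hasDerivAt_id t).const_mul (a / s)).add_const (b / s))).deriv.trans (by simp)
  calc ∫ t, deriv (fun t => φ (a / s * t + b / s)) t ^ 2 * (a / 2 * t ^ 2 + b * t + 1)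
      = ∫ t, a / 2 *
          (deriv φ (a / s * t + b / s) ^ 2 * (1 + (a / s * t + b / s) ^ 2)) := by
        congr 1 with t
        rw [hderiv, quadratic_eq_mul_one_add_sq ha.ne' hs.ne' hs2]
        field_simp
    _ = s / 2 * ∫ v, deriv φ v ^ 2 * (1 + v ^ 2) := by
        rw [integral_const_mul, integral_comp_mul_add (fun v => deriv φ v ^ 2 * (1 + v ^ 2)),
          inv_div, abs_of_pos (div_pos hs ha)]
        field_simp

lemma integral_comp_sq_div_quadratic (ha : 0 < a) (hs : 0 < s) (hs2 : s ^ 2 = 2 * a - b ^ 2)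
    (φ : ℝ → ℝ) :
    s ^ 2 * ∫ t, φ (a / s * t + b / s) ^ 2 / (a / 2 * t ^ 2 + b * t + 1) =
      2 * s * ∫ v, φ v ^ 2 / (1 + v ^ 2) := by
  calc s ^ 2 * ∫ t, φ (a / s * t + b / s) ^ 2 / (a / 2 * t ^ 2 + b * t + 1)
      = s ^ 2 * ∫ t, 2 * a / s ^ 2 *
          (φ (a / s * t + b / s) ^ 2 / (1 + (a / s * t + b / s) ^ 2)) := by
        congr 2 with t
        rw [quadratic_eq_mul_one_add_sq ha.ne' hs.ne' hs2]
        field_simp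
    _ = 2 * s * ∫ v, φ v ^ 2 / (1 + v ^ 2) := by
        rw [integral_const_mul, integral_comp_mul_add (fun v => φ v ^ 2 / (1 + v ^ 2)),
          inv_div, abs_of_pos (div_pos hs ha)]
        field_simp

end Rescaling

theorem stmt18_general (a b : ℝ) (hb : b ^ 2 < 2 * a)
    (h : ℝ → ℝ) (hh : ∀ t : ℝ, h t = a / 2 * t ^ 2 + b * t + 1) :
    ∃ ζ : ℝ → ℝ, ContDiff ℝ 1 ζ ∧ HasCompactSupport ζ ∧
      (∫ t : ℝ, (deriv ζ t) ^ 2 * h t) < (2 * a - b ^ 2) * ∫ t : ℝ, (ζ t) ^ 2 / h t := by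
  obtain rfl : h = fun t => a / 2 * t ^ 2 + b * t + 1 := funext hh
  have ha : 0 < a := by nlinarith [sq_nonneg b]
  set s := √(2 * a - b ^ 2)
  have hs : 0 < s := sqrt_pos.2 (by linarith)
  have hs2 : s ^ 2 = 2 * a - b ^ 2 := sq_sqrt (by linarith)
  refine ⟨fun t => hardyBump (a / s * t + b / s), contDiff_hardyBump.comp (by fun_prop),
    hasCompactSupport_hardyBump.comp_homeomorph (affineHomeomorph _ _ (by positivity)), ?_⟩
  rw [integral_deriv_comp_sq_mul_quadratic ha hs hs2
    (contDiff_hardyBump.differentiable one_ne_zero), ← hs2,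
    integral_comp_sq_div_quadratic ha hs hs2]
  nlinarith [integral_deriv_hardyBump_sq_mul_lt]

theorem stmt18 (a b : ℝ) (ha : 0 < a) (hb : b ^ 2 < 2 * a)
    (h : ℝ → ℝ) (hh : ∀ t : ℝ, h t = a / 2 * t ^ 2 + b * t + 1) :
    ∃ ζ : ℝ → ℝ, ContDiff ℝ 1 ζ ∧ HasCompactSupport ζ ∧
      (∫ t : ℝ, (deriv ζ t) ^ 2 * h t) < (2 * a - b ^ 2) * ∫ t : ℝ, (ζ t) ^ 2 / h t :=
  stmt18_general a b hb h hh
end
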